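/- Let U ∈ ℝ^{d×n} be a frame and z ∈ ℝ^n a positive vector such that ‖lev^U(z) − (d/n)·1_n‖_2 ≤ d/(2n) (in particular ε := d/(2n)-approximate (I_d, (d/n)1_n)-position). Define the inner product ⟨u,v⟩_Q := u^T (U Z U^T)^{-1} v with norm ‖u‖_Q² = ⟨u,u⟩_Q. Then for every nonzero w ∈ ℝ^d, the set T := { j ∈ [n] : ⟨w, u_j⟩_Q² ≥ (1/(4d))·‖w‖_Q²·‖u_j‖_Q² } satisfies |T| ≥ n/(5d). -/

import Mathlib

/-!
Write `u_j` for the columns of `U` and `M = U Z Uᵀ`, so that `Σ_j z_j u_j u_jᵀ = M`. For the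
inner product `⟨·,·⟩_Q` given by `M⁻¹` this is the Parseval identity
`Σ_j z_j ⟨w, u_j⟩_Q² = ‖w‖_Q²`, and taking traces gives `Σ_j lev_j = d`. The columns outside `T`
contribute less than `(1/(4d)) ‖w‖_Q² Σ_j lev_j = ‖w‖_Q² / 4` to the Parseval sum, so the columns
in `T` carry at least `3/4` of it. By Cauchy–Schwarz each column contributes at most
`‖w‖_Q² lev_j`, and the `ℓ₂` hypothesis bounds every `lev_j` by `3d/(2n)`; hence
`|T| ≥ n/(2d)`.
-/

open Matrix BigOperators

/-- Leverage scores: `lev^U_j(z) = z_j · u_jᵀ (U Z Uᵀ)⁻¹ u_j`. -/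
noncomputable def lev {d n : ℕ} (U : Matrix (Fin d) (Fin n) ℝ) (z : Fin n → ℝ)
    (j : Fin n) : ℝ :=
  z j * ((fun i => U i j) ⬝ᵥ ((U * Matrix.diagonal z * Uᵀ)⁻¹ *ᵥ fun i => U i j))

/-- The inner product `⟨u,v⟩_Q = uᵀ (U Z Uᵀ)⁻¹ v` induced by the scaling `z`. -/
noncomputable def Qip {d n : ℕ} (U : Matrix (Fin d) (Fin n) ℝ) (z : Fin n → ℝ)
    (u v : Fin d → ℝ) : ℝ :=
  u ⬝ᵥ ((U * Matrix.diagonal z * Uᵀ)⁻¹ *ᵥ v)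

open Finset

theorem le_add_of_sqrt_sum_sub_sq_le {ι : Type*} [Fintype ι] (x : ι → ℝ) {c r : ℝ}
    (h : √(∑ i, (x i - c) ^ 2) ≤ r) (j : ι) : x j ≤ c + r := by
  have hj : |x j - c| ≤ √(∑ i, (x i - c) ^ 2) := by
    rw [← Real.sqrt_sq_eq_abs]
    exact Real.sqrt_le_sqrt
      (single_le_sum (f := fun i => (x i - c) ^ 2) (fun i _ => sq_nonneg _) (mem_univ j))
  linarith [le_abs_self (x j - c)]

theorem one_sub_mul_le_card_filter_mul {ι : Type*} [Fintype ι] (z a q : ι → ℝ) {W D L t : ℝ}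
    (hz : ∀ j, 0 ≤ z j) (hq : ∀ j, 0 ≤ q j) (ht : 0 ≤ t) (hW : 0 < W)
    (hsum_a : W ≤ ∑ j, z j * a j ^ 2) (hsum_q : ∑ j, z j * q j ≤ D)
    (ha : ∀ j, a j ^ 2 ≤ W * q j) (hL : ∀ j, z j * q j ≤ L) :
    1 - t * D ≤ #{j | t * W * q j ≤ a j ^ 2} * L := by
  classical
  set T : Finset ι := {j | t * W * q j ≤ a j ^ 2}
  have hT : ∑ j ∈ T, z j * a j ^ 2 ≤ #T * (W * L) := by
    rw [← nsmul_eq_mul, ← sum_const]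
    refine sum_le_sum fun j _ => ?_
    calc z j * a j ^ 2 ≤ z j * (W * q j) := mul_le_mul_of_nonneg_left (ha j) (hz j)
      _ = W * (z j * q j) := by ring
      _ ≤ W * L := mul_le_mul_of_nonneg_left (hL j) hW.le
  have hTc : ∑ j ∈ Tᶜ, z j * a j ^ 2 ≤ t * W * D :=
    calc _ ≤ ∑ j ∈ Tᶜ, t * W * (z j * q j) := sum_le_sum fun j hj => by
          have hj : a j ^ 2 < t * W * q j := by simpa [T] using hj
          exact (mul_le_mul_of_nonneg_left hj.le (hz j)).trans_eq (by ring)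
      _ ≤ ∑ j, t * W * (z j * q j) := sum_le_sum_of_subset_of_nonneg (subset_univ _)
          fun j _ _ => mul_nonneg (by positivity) (mul_nonneg (hz j) (hq j))
      _ ≤ t * W * D := by rw [← mul_sum]; gcongr
  rw [← sum_add_sum_compl T] at hsum_a
  refine le_of_mul_le_mul_left ?_ hW
  linear_combination hsum_a + hT + hTc

section Frame

variable {m ι : Type*} [Fintype m] [Fintype ι] [DecidableEq ι]

theorem posDef_mul_diagonal_mul_transpose {U : Matrix m ι ℝ} (hU : U.rank = Fintype.card m)
    {z : ι → ℝ} (hz : ∀ j, 0 < z j) : (U * diagonal z * Uᵀ).PosDef := by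
  have hrows : LinearIndependent ℝ U.row :=
    linearIndependent_iff_card_eq_finrank_span.mpr (by rw [← hU]; exact U.rank_eq_finrank_span_row)
  simpa using (PosDef.diagonal hz).mul_mul_conjTranspose_same (vecMul_injective_iff.mpr hrows)

theorem posSemidef_mul_diagonal_mul_transpose (U : Matrix m ι ℝ) {z : ι → ℝ} (hz : 0 ≤ z) :
    (U * diagonal z * Uᵀ).PosSemidef := by
  simpa using (PosSemidef.diagonal hz).mul_mul_conjTranspose_same U

theorem dotProduct_mul_diagonal_mul_transpose_mulVec (U : Matrix m ι ℝ) (z : ι → ℝ)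
    (x y : m → ℝ) :
    x ⬝ᵥ ((U * diagonal z * Uᵀ) *ᵥ y) = ∑ j, z j * (x ⬝ᵥ U.col j) * (y ⬝ᵥ U.col j) := by
  rw [← mulVec_mulVec, ← mulVec_mulVec, dotProduct_mulVec]
  refine sum_congr rfl fun j _ => ?_
  rw [mulVec_diagonal, dotProduct_comm y]
  change (x ⬝ᵥ U.col j) * (z j * (U.col j ⬝ᵥ y)) = _
  ring

theorem trace_mul_mul_diagonal_mul_transpose (A : Matrix m m ℝ) (U : Matrix m ι ℝ)
    (z : ι → ℝ) :
    trace (A * (U * diagonal z * Uᵀ)) = ∑ j, z j * (U.col j ⬝ᵥ (A *ᵥ U.col j)) := by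
  rw [← Matrix.mul_assoc, trace_mul_comm, ← Matrix.mul_assoc, ← Matrix.mul_assoc, trace_mul_comm,
    Matrix.mul_assoc]
  simp only [trace, diag_apply, diagonal_mul]
  rfl

end Frame

theorem Matrix.PosSemidef.dotProduct_mulVec_sq_le {m : Type*} [Fintype m] {M : Matrix m m ℝ}
    (hM : M.PosSemidef) (x y : m → ℝ) :
    (x ⬝ᵥ (M *ᵥ y)) ^ 2 ≤ (x ⬝ᵥ (M *ᵥ x)) * (y ⬝ᵥ (M *ᵥ y)) := by
  let := M.toSeminormedAddCommGroup hM
  let := M.toInnerProductSpace hM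
  have hinner : ∀ u v : m → ℝ, inner ℝ u v = u ⬝ᵥ (M *ᵥ v) := fun u v =>
    (dotProduct_comm _ _).trans (by rw [star_trivial])
  simpa only [hinner, sq] using real_inner_mul_inner_self_le x y

section Qip

variable {d n : ℕ} (U : Matrix (Fin d) (Fin n) ℝ)

theorem Qip_comm (z : Fin n → ℝ) (x y : Fin d → ℝ) : Qip U z x y = Qip U z y x := by
  have hsymm : (U * diagonal z * Uᵀ)⁻¹ᵀ = (U * diagonal z * Uᵀ)⁻¹ := by
    rw [transpose_nonsing_inv, transpose_mul, transpose_mul, transpose_transpose,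
      diagonal_transpose, Matrix.mul_assoc]
  rw [Qip, Qip, dotProduct_mulVec, ← mulVec_transpose, hsymm, dotProduct_comm]

theorem Qip_sq_le {z : Fin n → ℝ} (hz : 0 ≤ z) (x y : Fin d → ℝ) :
    Qip U z x y ^ 2 ≤ Qip U z x x * Qip U z y y :=
  (posSemidef_mul_diagonal_mul_transpose U hz).inv.dotProduct_mulVec_sq_le x y

theorem Qip_self_nonneg {z : Fin n → ℝ} (hz : 0 ≤ z) (x : Fin d → ℝ) : 0 ≤ Qip U z x x := by
  rw [Qip]
  simpa only [star_trivial] using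
    (posSemidef_mul_diagonal_mul_transpose U hz).inv.dotProduct_mulVec_nonneg x

theorem Qip_self_pos {z : Fin n → ℝ} (hM : (U * diagonal z * Uᵀ).PosDef) {x : Fin d → ℝ}
    (hx : x ≠ 0) : 0 < Qip U z x x := by
  rw [Qip]
  simpa only [star_trivial] using hM.inv.dotProduct_mulVec_pos hx

theorem sum_mul_Qip_sq {z : Fin n → ℝ} (hM : IsUnit (U * diagonal z * Uᵀ).det)
    (x : Fin d → ℝ) : ∑ j, z j * Qip U z x (fun i => U i j) ^ 2 = Qip U z x x := by
  set v := (U * diagonal z * Uᵀ)⁻¹ *ᵥ x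
  have hv : ∀ j, Qip U z x (fun i => U i j) = v ⬝ᵥ U.col j := fun j => by
    rw [Qip_comm, Qip, dotProduct_comm]
    rfl
  calc ∑ j, z j * Qip U z x (fun i => U i j) ^ 2 = v ⬝ᵥ ((U * diagonal z * Uᵀ) *ᵥ v) := by
        simp only [dotProduct_mul_diagonal_mul_transpose_mulVec, hv]
        exact sum_congr rfl fun j _ => by ring
    _ = Qip U z x x := by
        rw [mulVec_mulVec, mul_nonsing_inv _ hM, one_mulVec, dotProduct_comm]
        rfl

theorem sum_lev {z : Fin n → ℝ} (hM : IsUnit (U * diagonal z * Uᵀ).det) :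
    ∑ j, lev U z j = d := by
  have := trace_mul_mul_diagonal_mul_transpose (U * diagonal z * Uᵀ)⁻¹ U z
  rw [nonsing_inv_mul _ hM, trace_one, Fintype.card_fin] at this
  exact this.symm

end Qip

/-- Margin lemma for approximately radially isotropic frames: if
`‖lev^U(z) − (d/n)1_n‖₂ ≤ d/(2n)`, then for every nonzero `w ∈ ℝ^d`, at least an
`1/(5d)` fraction of the columns `u_j` satisfy
`⟨w,u_j⟩_Q² ≥ (1/(4d))‖w‖_Q²‖u_j‖_Q²`. -/
theorem forster_margin {d n : ℕ} (U : Matrix (Fin d) (Fin n) ℝ) (hU : U.rank = d)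
    (z : Fin n → ℝ) (hz : ∀ j, 0 < z j)
    (hiso : Real.sqrt (∑ j, (lev U z j - (d : ℝ) / n) ^ 2) ≤ (d : ℝ) / (2 * n)) :
    ∀ w : Fin d → ℝ, w ≠ 0 →
      (n : ℝ) / (5 * d) ≤
        ({j : Fin n | (1 / (4 * (d : ℝ))) * Qip U z w w *
            Qip U z (fun i => U i j) (fun i => U i j)
          ≤ (Qip U z w (fun i => U i j)) ^ 2} : Set (Fin n)).ncard := by
  intro w hw
  have hM := posDef_mul_diagonal_mul_transpose (hU.trans (Fintype.card_fin d).symm) hz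
  have hd : 0 < d := Nat.pos_of_ne_zero (by rintro rfl; exact hw (Subsingleton.elim _ _))
  have hn : (0 : ℝ) < n := by exact_mod_cast hd.trans_le (hU ▸ U.rank_le_width)
  have hdet : IsUnit (U * diagonal z * Uᵀ).det := hM.det_pos.ne'.isUnit
  have hz0 : 0 ≤ z := fun j => (hz j).le
  -- `lev U z j` unfolds to `z j * Qip U z u_j u_j`, the weight of column `j`.
  have key := one_sub_mul_le_card_filter_mul (t := 1 / (4 * d)) (D := d) (L := d / n + d / (2 * n))
    z (fun j => Qip U z w (fun i => U i j))
    (fun j => Qip U z (fun i => U i j) (fun i => U i j)) hz0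
    (fun j => Qip_self_nonneg U hz0 _) (by positivity)
    (Qip_self_pos U hM hw) (sum_mul_Qip_sq U hdet w).ge (sum_lev U hdet).le
    (fun j => Qip_sq_le U hz0 _ _)
    (fun j => le_add_of_sqrt_sum_sub_sq_le (lev U z) hiso j)
  have hbound : ∀ k : ℝ, 1 - 1 / (4 * d) * d ≤ k * (d / n + d / (2 * n)) → n / (5 * d) ≤ k := by
    intro k hk
    rw [div_le_iff₀ (by positivity)]
    field_simp at hk
    nlinarith
  rw [← coe_filter_univ, Set.ncard_coe_finset]
  exact hbound _ key
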